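/- arXiv:1405.0025 — 7 statements merged into one kernel-verified Lean document; each statement's English description precedes it below -/
import Mathlib

section
/- Let n ≥ 2, let g₀, g₁, g₂, g₃ be complex n×n matrices, and let s = (s₀,s₁,s₂,s₃) be nonnegative integers with s₀+s₁+s₂+s₃ = n−2. Then the Ptolemy relation holds: c_{s+(1,0,0,1)}·c_{s+(0,1,1,0)} − c_{s+(1,0,1,0)}·c_{s+(0,1,0,1)} + c_{s+(1,1,0,0)}·c_{s+(0,0,1,1)} = 0, where c_t = c_t(g₀,g₁,g₂,g₃) and the sums s+(…) are componentwise. -/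
/-!
Write `W` for the `n - 2` columns shared by all six matrices (the first `sᵢ` columns of each
`gᵢ`) and `xᵢ` for column `sᵢ` of `gᵢ`. Each coordinate `c_{s + eᵢ + eⱼ}` is, up to the sign of
the column permutation moving `xᵢ, xⱼ` in front, the value `ω(xᵢ, xⱼ) = det(xᵢ, xⱼ, W)` of a
single alternating form, and the three products acquire the same sign. The relation is thus the
three-term Plücker relation for `ω`, which follows from Laplace expansion of an
`(n + 1) × (n + 1)` determinant with a repeated column.
-/

/-- The matrix obtained by concatenating, in order, the first `t0` columns of `g0`,
the first `t1` columns of `g1`, the first `t2` columns of `g2`, and the remaining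
columns of `g3` (when `t0 + t1 + t2 + t3 = n`, these are the first `t3` columns of `g3`). -/
noncomputable def ptolemyMatrix {n : ℕ} (t0 t1 t2 : ℕ)
    (g0 g1 g2 g3 : Matrix (Fin n) (Fin n) ℂ) : Matrix (Fin n) (Fin n) ℂ :=
  Matrix.of fun i j =>
    if (j : ℕ) < t0 then g0 i ⟨(j : ℕ), j.isLt⟩
    else if (j : ℕ) < t0 + t1 then
      g1 i ⟨(j : ℕ) - t0, lt_of_le_of_lt (Nat.sub_le _ _) j.isLt⟩
    else if (j : ℕ) < t0 + t1 + t2 then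
      g2 i ⟨(j : ℕ) - (t0 + t1), lt_of_le_of_lt (Nat.sub_le _ _) j.isLt⟩
    else
      g3 i ⟨(j : ℕ) - (t0 + t1 + t2), lt_of_le_of_lt (Nat.sub_le _ _) j.isLt⟩

/-- The Ptolemy coordinate `c_t(g0,g1,g2,g3)` for `t = (t0,t1,t2,t3)` with
`t0 + t1 + t2 + t3 = n`: the determinant of the concatenation of the first `t0`
columns of `g0`, the first `t1` columns of `g1`, the first `t2` columns of `g2`
and the first `t3` columns of `g3`. -/
noncomputable def ptolemyCoord {n : ℕ} (t0 t1 t2 t3 : ℕ)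
    (g0 g1 g2 g3 : Matrix (Fin n) (Fin n) ℂ) : ℂ :=
  (ptolemyMatrix t0 t1 t2 g0 g1 g2 g3).det

open Matrix

theorem AlternatingMap.map_insertNth_insertNth {R M N : Type*} [CommRing R] [AddCommGroup M]
    [AddCommGroup N] [Module R M] [Module R N] {m : ℕ} (f : M [⋀^Fin (m + 2)]→ₗ[R] N)
    (p : Fin (m + 2)) (q : Fin (m + 1)) (x y : M) (w : Fin m → M) :
    f (p.insertNth x (q.insertNth y w)) = (-1) ^ ((p : ℕ) + q) • f (vecCons x (vecCons y w)) := by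
  have hswap : (Fin.cons y (Fin.cons x w) : Fin (m + 2) → M) = Fin.insertNth 1 x (Fin.cons y w) := by
    rw [← Fin.succ_zero_eq_one, Fin.insertNth_succ_cons, Fin.insertNth_zero']
  rw [f.map_insertNth, vecCons, ← Fin.insertNth_succ_cons, f.map_insertNth, vecCons, hswap,
    f.map_insertNth, smul_smul, smul_smul, ← pow_add, ← pow_add, Fin.val_succ, Fin.val_one,
    show (p : ℕ) + (q + 1) + 1 = p + q + 2 by omega, pow_add, neg_one_sq, mul_one]
  rfl

theorem Fin.removeNth_succ_cons {α : Type*} {n : ℕ} (i : Fin (n + 1)) (x : α)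
    (p : Fin (n + 1) → α) :
    removeNth i.succ (cons x p : Fin (n + 2) → α) = cons x (removeNth i p) := by
  rw [← insertNth_self_removeNth i p, ← insertNth_succ_cons, removeNth_insertNth,
    removeNth_insertNth]

namespace Matrix

variable {R : Type*} [CommRing R]

/-- Laplace expansion along the first column of the matrix with rows `(L (u i), u i)`, whose
first column is a combination of the others. -/
theorem sum_neg_one_pow_mul_det_removeNth_eq_zero {N : ℕ}
    (u : Fin (N + 1) → Fin N → R) (L : (Fin N → R) →ₗ[R] R) :
    ∑ i : Fin (N + 1), (-1) ^ (i : ℕ) * L (u i) * (of (Fin.removeNth i u)).det = 0 := by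
  have hcoord (r : Fin N) :
      ∑ i : Fin (N + 1), (-1) ^ (i : ℕ) * u i r * (of (Fin.removeNth i u)).det = 0 := by
    have h := det_succ_column_zero (of fun i => Fin.cons (u i r) (u i) : Matrix _ _ R)
    rw [det_zero_of_column_eq (Fin.succ_ne_zero r).symm (by simp)] at h
    convert h.symm using 4 with i
    · simp
    · ext; simp [Fin.removeNth]
  calc ∑ i : Fin (N + 1), (-1) ^ (i : ℕ) * L (u i) * (of (Fin.removeNth i u)).det
      = ∑ r, L (fun j => if r = j then 1 else 0) *
          ∑ i : Fin (N + 1), (-1) ^ (i : ℕ) * u i r * (of (Fin.removeNth i u)).det := by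
        simp only [Finset.mul_sum]
        rw [Finset.sum_comm]
        refine Finset.sum_congr rfl fun i _ => ?_
        rw [L.pi_apply_eq_sum_univ, Finset.mul_sum, Finset.sum_mul]
        exact Finset.sum_congr rfl fun r _ => by simp only [smul_eq_mul]; ring
    _ = 0 := by simp [hcoord]

def frameDet {m : ℕ} (w : Fin m → Fin (m + 2) → R) (x y : Fin (m + 2) → R) : R :=
  (of (vecCons x (vecCons y w))).det

theorem frameDet_plucker {m : ℕ} (w : Fin m → Fin (m + 2) → R) (a b c d : Fin (m + 2) → R) :
    frameDet w a b * frameDet w c d - frameDet w a c * frameDet w b d +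
      frameDet w a d * frameDet w b c = 0 := by
  let L := (detRowAlternating (R := R) (n := Fin (m + 2))).toMultilinearMap.toLinearMap
    (vecCons 0 (vecCons d w)) 0
  have hL (x) : L x = frameDet w x d := by
    simp only [L, MultilinearMap.toLinearMap_apply, vecCons, Fin.update_cons_zero]
    rfl
  have hLw (k : Fin m) : L (w k) = 0 := by
    rw [hL]
    exact det_zero_of_row_eq (i := 0) (j := k.succ.succ) (Fin.succ_ne_zero _).symm rfl
  have h := sum_neg_one_pow_mul_det_removeNth_eq_zero (vecCons a (vecCons b (vecCons c w))) L
  simp only [Fin.sum_univ_succ, vecCons, Fin.cons_zero, Fin.cons_succ, Fin.removeNth_zero,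
    Fin.tail_cons, Fin.removeNth_succ_cons, hLw, mul_zero, zero_mul, Finset.sum_const_zero] at h
  simp only [hL, Fin.val_zero, Fin.val_succ, pow_zero, pow_one, one_mul, zero_add] at h
  simp only [frameDet, vecCons] at h ⊢
  linear_combination h

theorem det_of_insertNth_insertNth {m : ℕ} (p : Fin (m + 2)) (q : Fin (m + 1))
    (x y : Fin (m + 2) → R) (w : Fin m → Fin (m + 2) → R) :
    (of (p.insertNth x (q.insertNth y w))).det = (-1) ^ ((p : ℕ) + q) * frameDet w x y := by
  have h := detRowAlternating.map_insertNth_insertNth p q x y w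
  rw [zsmul_eq_mul] at h
  push_cast at h
  exact h

end Matrix

section PtolemyColumns

variable {n : ℕ} (g0 g1 g2 g3 : Matrix (Fin n) (Fin n) ℂ)

noncomputable def ptolemyColumns (k : ℕ) (hk : k ≤ n) (t0 t1 t2 : ℕ) : Fin k → Fin n → ℂ :=
  fun j => (ptolemyMatrix t0 t1 t2 g0 g1 g2 g3)ᵀ (Fin.castLE hk j)

variable {k t0 t1 t2 : ℕ}

theorem ptolemyCoord_eq_det_ptolemyColumns (t3 : ℕ) :
    ptolemyCoord t0 t1 t2 t3 g0 g1 g2 g3 =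
      (of (ptolemyColumns g0 g1 g2 g3 n le_rfl t0 t1 t2)).det :=
  (det_transpose _).symm

theorem ptolemyColumns_eq_insertNth₀ {hk : k + 1 ≤ n} (h : t0 ≤ k) :
    ptolemyColumns g0 g1 g2 g3 (k + 1) hk (t0 + 1) t1 t2 =
      Fin.insertNth ⟨t0, by omega⟩ (g0ᵀ ⟨t0, by omega⟩)
        (ptolemyColumns g0 g1 g2 g3 k (by omega) t0 t1 t2) := by
  rw [Fin.eq_insertNth_iff]
  refine ⟨?_, funext fun j => ?_⟩ <;> ext r <;>
    simp only [Fin.removeNth, ptolemyColumns, ptolemyMatrix, transpose_apply, of_apply,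
      Fin.succAbove, Fin.lt_def, Fin.val_castLE, Fin.val_castSucc, Fin.val_succ,
      apply_ite Fin.val] <;>
    repeat' split
  all_goals first | rfl | omega | (congr 2; omega)

theorem ptolemyColumns_eq_insertNth₁ {hk : k + 1 ≤ n} (h : t0 + t1 ≤ k) :
    ptolemyColumns g0 g1 g2 g3 (k + 1) hk t0 (t1 + 1) t2 =
      Fin.insertNth ⟨t0 + t1, by omega⟩ (g1ᵀ ⟨t1, by omega⟩)
        (ptolemyColumns g0 g1 g2 g3 k (by omega) t0 t1 t2) := by
  rw [Fin.eq_insertNth_iff]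
  refine ⟨?_, funext fun j => ?_⟩ <;> ext r <;>
    simp only [Fin.removeNth, ptolemyColumns, ptolemyMatrix, transpose_apply, of_apply,
      Fin.succAbove, Fin.lt_def, Fin.val_castLE, Fin.val_castSucc, Fin.val_succ,
      apply_ite Fin.val] <;>
    repeat' split
  all_goals first | rfl | omega | (congr 2; omega)

theorem ptolemyColumns_eq_insertNth₂ {hk : k + 1 ≤ n} (h : t0 + t1 + t2 ≤ k) :
    ptolemyColumns g0 g1 g2 g3 (k + 1) hk t0 t1 (t2 + 1) =
      Fin.insertNth ⟨t0 + t1 + t2, by omega⟩ (g2ᵀ ⟨t2, by omega⟩)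
        (ptolemyColumns g0 g1 g2 g3 k (by omega) t0 t1 t2) := by
  rw [Fin.eq_insertNth_iff]
  refine ⟨?_, funext fun j => ?_⟩ <;> ext r <;>
    simp only [Fin.removeNth, ptolemyColumns, ptolemyMatrix, transpose_apply, of_apply,
      Fin.succAbove, Fin.lt_def, Fin.val_castLE, Fin.val_castSucc, Fin.val_succ,
      apply_ite Fin.val] <;>
    repeat' split
  all_goals first | rfl | omega | (congr 2; omega)

theorem ptolemyColumns_eq_insertNth₃ {t3 : ℕ} {hk : k + 1 ≤ n} (h : t0 + t1 + t2 + t3 = k) :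
    ptolemyColumns g0 g1 g2 g3 (k + 1) hk t0 t1 t2 =
      Fin.insertNth (Fin.last k) (g3ᵀ ⟨t3, by omega⟩)
        (ptolemyColumns g0 g1 g2 g3 k (by omega) t0 t1 t2) := by
  rw [Fin.eq_insertNth_iff]
  refine ⟨?_, funext fun j => ?_⟩ <;> ext r <;>
    simp only [Fin.removeNth, ptolemyColumns, ptolemyMatrix, transpose_apply, of_apply,
      Fin.succAbove, Fin.lt_def, Fin.val_castLE, Fin.val_castSucc, Fin.val_last, Fin.val_succ,
      apply_ite Fin.val] <;>
    repeat' split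
  all_goals first | rfl | omega | (congr 2; omega)

end PtolemyColumns

/-- the Ptolemy relation (three-term Plücker relation) for the Ptolemy
coordinates of four `n × n` complex matrices, for any `s = (s0,s1,s2,s3)` with
`s0 + s1 + s2 + s3 = n - 2`. -/
theorem ptolemy_relation (n : ℕ) (hn : 2 ≤ n)
    (g0 g1 g2 g3 : Matrix (Fin n) (Fin n) ℂ)
    (s0 s1 s2 s3 : ℕ) (hs : s0 + s1 + s2 + s3 = n - 2) :
    ptolemyCoord (s0 + 1) s1 s2 (s3 + 1) g0 g1 g2 g3 *
        ptolemyCoord s0 (s1 + 1) (s2 + 1) s3 g0 g1 g2 g3 -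
      ptolemyCoord (s0 + 1) s1 (s2 + 1) s3 g0 g1 g2 g3 *
        ptolemyCoord s0 (s1 + 1) s2 (s3 + 1) g0 g1 g2 g3 +
      ptolemyCoord (s0 + 1) (s1 + 1) s2 s3 g0 g1 g2 g3 *
        ptolemyCoord s0 s1 (s2 + 1) (s3 + 1) g0 g1 g2 g3 = 0 := by
  obtain ⟨m, rfl⟩ : ∃ m, n = m + 1 + 1 := ⟨n - 2, by omega⟩
  have hm : s0 + s1 + s2 + s3 = m := by omega
  simp only [ptolemyCoord_eq_det_ptolemyColumns,
    ptolemyColumns_eq_insertNth₀ g0 g1 g2 g3 (show s0 ≤ m + 1 by omega),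
    ptolemyColumns_eq_insertNth₁ g0 g1 g2 g3 (show s0 + s1 ≤ m + 1 by omega),
    ptolemyColumns_eq_insertNth₁ g0 g1 g2 g3 (show s0 + s1 ≤ m by omega),
    ptolemyColumns_eq_insertNth₂ g0 g1 g2 g3 (show s0 + s1 + s2 ≤ m + 1 by omega),
    ptolemyColumns_eq_insertNth₂ g0 g1 g2 g3 (show s0 + s1 + s2 ≤ m by omega),
    ptolemyColumns_eq_insertNth₃ g0 g1 g2 g3 hm, det_of_insertNth_insertNth, Fin.val_last]
  -- every product carries the sign `(-1) ^ (S₀ + S₁ + S₂ + S₃)`, where `Sᵢ = s₀ + ⋯ + sᵢ`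
  linear_combination (-1) ^ (s0 + (s0 + s1) + (s0 + s1 + s2) + m) *
    frameDet_plucker (ptolemyColumns g0 g1 g2 g3 m (by omega) s0 s1 s2)
      (g0ᵀ ⟨s0, by omega⟩) (g1ᵀ ⟨s1, by omega⟩) (g2ᵀ ⟨s2, by omega⟩) (g3ᵀ ⟨s3, by omega⟩)
end

section
/- Let n ≥ 1, let g₀, g₁, g₂, g₃ be complex n×n matrices, let u₀, u₁, u₂, u₃ be unipotent upper-triangular n×n matrices, and let t = (t₀,t₁,t₂,t₃) be nonnegative integers with t₀+t₁+t₂+t₃ = n. Then c_t(g₀u₀, g₁u₁, g₂u₂, g₃u₃) = c_t(g₀, g₁, g₂, g₃). In particular, the Ptolemy coordinates depend only on the cosets g₀N, g₁N, g₂N, g₃N, where N is the group of unipotent upper-triangular matrices. -/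
/-- A matrix is unipotent upper-triangular if its diagonal entries are all `1`
and its entries below the diagonal are all `0`. -/
def IsUnipotentUpperTriangular {n : ℕ} (x : Matrix (Fin n) (Fin n) ℂ) : Prop :=
  (∀ i : Fin n, x i i = 1) ∧ ∀ i j : Fin n, j < i → x i j = 0

/-!
Place the matrices `g₀, …, g₃` side by side in an `n × 4n` block row `G`. The Ptolemy matrix is
the submatrix of `G` on a set `S` of columns consisting of an initial segment of each block, and
replacing each `gₖ` by `gₖuₖ` replaces `G` by `G · diag(u₀, …, u₃)`. As `uₖ` is upper triangular,
column `j` of `gₖuₖ` only involves the columns `m ≤ j` of `gₖ`, which lie in `S` whenever `j`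
does. So the new Ptolemy matrix is the old one times the principal `S × S` submatrix of
`diag(u₀, …, u₃)`, which is again unipotent upper-triangular and has determinant `1`.
-/

open Matrix

namespace Matrix

variable {l m n o p q R : Type*}

theorem submatrix_mul_of_injective [Fintype n] [Fintype o] [NonUnitalNonAssocSemiring R]
    (M : Matrix m n R) (N : Matrix n p R) (e₁ : l → m) (e₂ : o → n) (e₃ : q → p)
    (he₂ : Function.Injective e₂) (hN : ∀ k j, k ∉ Set.range e₂ → N k (e₃ j) = 0) :
    (M * N).submatrix e₁ e₃ = M.submatrix e₁ e₂ * N.submatrix e₂ e₃ :=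
  ext fun _ j => (Fintype.sum_of_injective e₂ he₂ _ _
    (fun k hk => mul_eq_zero_of_right _ (hN k j hk)) fun _ => rfl).symm

def blockRow (g : o → Matrix l m R) : Matrix l (m × o) R :=
  of fun i c => g c.2 i c.1

theorem blockRow_mul_blockDiagonal [Fintype m] [Fintype o] [DecidableEq o]
    [NonUnitalNonAssocSemiring R] (g : o → Matrix l m R) (u : o → Matrix m n R) :
    blockRow g * blockDiagonal u = blockRow fun k => g k * u k := by
  ext i ⟨j, k⟩
  simp [blockRow, mul_apply, Fintype.sum_prod_type, blockDiagonal_apply]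

end Matrix

theorem IsUnipotentUpperTriangular.det_eq_one {n : ℕ} {x : Matrix (Fin n) (Fin n) ℂ}
    (hx : IsUnipotentUpperTriangular x) : x.det = 1 := by
  rw [det_of_isUpperTriangular fun i j hij => hx.2 i j hij]
  exact Finset.prod_eq_one fun i _ => hx.1 i

def ptolemyOffset (t0 t1 t2 : ℕ) : Fin 4 → ℕ :=
  ![0, t0, t0 + t1, t0 + t1 + t2]

def ptolemyBlock (t0 t1 t2 j : ℕ) : Fin 4 :=
  if j < t0 then 0 else if j < t0 + t1 then 1 else if j < t0 + t1 + t2 then 2 else 3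

def ptolemyColumn {n : ℕ} (t0 t1 t2 : ℕ) (j : Fin n) : Fin n × Fin 4 :=
  (⟨j - ptolemyOffset t0 t1 t2 (ptolemyBlock t0 t1 t2 j), (Nat.sub_le _ _).trans_lt j.isLt⟩,
    ptolemyBlock t0 t1 t2 j)

section PtolemyColumn

variable {n : ℕ} (t0 t1 t2 : ℕ)

theorem ptolemyOffset_add_ptolemyColumn (j : Fin n) :
    ptolemyOffset t0 t1 t2 (ptolemyColumn t0 t1 t2 j).2 + (ptolemyColumn t0 t1 t2 j).1 = j := by
  simp only [ptolemyColumn, ptolemyBlock, ptolemyOffset]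
  split_ifs <;> simp <;> omega

theorem ptolemyColumn_injective : Function.Injective (ptolemyColumn (n := n) t0 t1 t2) :=
  fun j j' h => Fin.ext <| by
    rw [← ptolemyOffset_add_ptolemyColumn t0 t1 t2 j,
      ← ptolemyOffset_add_ptolemyColumn t0 t1 t2 j', h]

theorem mem_range_ptolemyColumn_of_le (j m : Fin n) (hm : m ≤ (ptolemyColumn t0 t1 t2 j).1) :
    (m, (ptolemyColumn t0 t1 t2 j).2) ∈ Set.range (ptolemyColumn t0 t1 t2) := by
  have hj := ptolemyOffset_add_ptolemyColumn t0 t1 t2 j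
  refine ⟨⟨ptolemyOffset t0 t1 t2 (ptolemyColumn t0 t1 t2 j).2 + m, by omega⟩, ?_⟩
  rw [Fin.le_def] at hm
  simp only [ptolemyColumn, ptolemyBlock, ptolemyOffset, Prod.ext_iff, Fin.ext_iff] at hm hj ⊢
  split_ifs at hm hj ⊢ <;> simp_all <;> omega

theorem ptolemyMatrix_eq_submatrix_blockRow (g0 g1 g2 g3 : Matrix (Fin n) (Fin n) ℂ) :
    ptolemyMatrix t0 t1 t2 g0 g1 g2 g3 =
      (blockRow ![g0, g1, g2, g3]).submatrix id (ptolemyColumn t0 t1 t2) := by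
  ext i j
  simp only [ptolemyMatrix, ptolemyColumn, ptolemyBlock, ptolemyOffset, blockRow, of_apply,
    submatrix_apply, id]
  split_ifs <;> rfl

end PtolemyColumn

section Unipotent

variable {n : ℕ} (t0 t1 t2 : ℕ) {u : Fin 4 → Matrix (Fin n) (Fin n) ℂ}

theorem blockDiagonal_apply_ptolemyColumn_eq_zero (hu : ∀ k, IsUnipotentUpperTriangular (u k))
    (c : Fin n × Fin 4) (j : Fin n) (hc : c ∉ Set.range (ptolemyColumn t0 t1 t2)) :
    blockDiagonal u c (ptolemyColumn t0 t1 t2 j) = 0 := by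
  obtain ⟨m, k⟩ := c
  rw [blockDiagonal_apply]
  split_ifs with hk
  · subst hk
    exact (hu _).2 _ _ (lt_of_not_ge fun hm => hc (mem_range_ptolemyColumn_of_le t0 t1 t2 j m hm))
  · rfl

theorem isUnipotentUpperTriangular_submatrix_ptolemyColumn
    (hu : ∀ k, IsUnipotentUpperTriangular (u k)) :
    IsUnipotentUpperTriangular
      ((blockDiagonal u).submatrix (ptolemyColumn t0 t1 t2) (ptolemyColumn t0 t1 t2)) := by
  refine ⟨fun j => by rw [submatrix_apply, blockDiagonal_apply, if_pos rfl]; exact (hu _).1 _,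
    fun j j' hj' => ?_⟩
  simp only [submatrix_apply, blockDiagonal_apply]
  split_ifs with hk
  · have h := ptolemyOffset_add_ptolemyColumn t0 t1 t2 j
    have h' := ptolemyOffset_add_ptolemyColumn t0 t1 t2 j'
    rw [hk] at h
    exact (hu _).2 _ _ (by rw [Fin.lt_def] at hj' ⊢; omega)
  · rfl

end Unipotent

theorem ptolemyCoord_unipotent_invariance_general (n : ℕ)
    (g0 g1 g2 g3 u0 u1 u2 u3 : Matrix (Fin n) (Fin n) ℂ)
    (hu0 : IsUnipotentUpperTriangular u0) (hu1 : IsUnipotentUpperTriangular u1)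
    (hu2 : IsUnipotentUpperTriangular u2) (hu3 : IsUnipotentUpperTriangular u3)
    (t0 t1 t2 t3 : ℕ) :
    ptolemyCoord t0 t1 t2 t3 (g0 * u0) (g1 * u1) (g2 * u2) (g3 * u3) =
      ptolemyCoord t0 t1 t2 t3 g0 g1 g2 g3 := by
  have hu : ∀ k, IsUnipotentUpperTriangular (![u0, u1, u2, u3] k) := by
    intro k; fin_cases k <;> assumption
  have hmul : ![g0 * u0, g1 * u1, g2 * u2, g3 * u3] =
      fun k => ![g0, g1, g2, g3] k * ![u0, u1, u2, u3] k := by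
    ext1 k; fin_cases k <;> rfl
  rw [ptolemyCoord, ptolemyCoord, ptolemyMatrix_eq_submatrix_blockRow,
    ptolemyMatrix_eq_submatrix_blockRow, hmul, ← blockRow_mul_blockDiagonal,
    submatrix_mul_of_injective _ _ _ _ _ (ptolemyColumn_injective t0 t1 t2)
      (blockDiagonal_apply_ptolemyColumn_eq_zero t0 t1 t2 hu), det_mul,
    (isUnipotentUpperTriangular_submatrix_ptolemyColumn t0 t1 t2 hu).det_eq_one, mul_one]

/-- the Ptolemy coordinates are invariant under right multiplication of
each matrix by a unipotent upper-triangular matrix; i.e. they only depend on the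
cosets `g₀N, g₁N, g₂N, g₃N`. -/
theorem ptolemyCoord_unipotent_invariance (n : ℕ) (hn : 1 ≤ n)
    (g0 g1 g2 g3 u0 u1 u2 u3 : Matrix (Fin n) (Fin n) ℂ)
    (hu0 : IsUnipotentUpperTriangular u0) (hu1 : IsUnipotentUpperTriangular u1)
    (hu2 : IsUnipotentUpperTriangular u2) (hu3 : IsUnipotentUpperTriangular u3)
    (t0 t1 t2 t3 : ℕ) (ht : t0 + t1 + t2 + t3 = n) :
    ptolemyCoord t0 t1 t2 t3 (g0 * u0) (g1 * u1) (g2 * u2) (g3 * u3) =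
      ptolemyCoord t0 t1 t2 t3 g0 g1 g2 g3 :=
  ptolemyCoord_unipotent_invariance_general n g0 g1 g2 g3 u0 u1 u2 u3 hu0 hu1 hu2 hu3 t0 t1 t2 t3
end

section
/- Let x, y ∈ ℂ with x ∉ {0,1}, y ∉ {0,1}, and x ≠ y. Then in ⋀²_ℤ(ℂˣ): x∧(1−x) − y∧(1−y) + (y/x)∧(1−y/x) − ((1−x⁻¹)/(1−y⁻¹))∧(1−(1−x⁻¹)/(1−y⁻¹)) + ((1−x)/(1−y))∧(1−(1−x)/(1−y)) = 0. That is, the Dehn invariant map ν(z) = z∧(1−z) vanishes on the five-term relation, and hence is well defined on the pre-Bloch group 𝒫(ℂ). -/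
/-- The elementary wedge `a ∧ b` of two nonzero complex numbers in the second exterior
power `⋀²_ℤ(ℂˣ)` of the multiplicative group `ℂˣ` (viewed additively), extended by `0`
when one of the arguments vanishes. -/
noncomputable def cwedge (a b : ℂ) : ⋀[ℤ]^2 (Additive ℂˣ) :=
  if h : a ≠ 0 ∧ b ≠ 0 then
    ⟨ExteriorAlgebra.ιMulti ℤ 2
        ![Additive.ofMul (Units.mk0 a h.1), Additive.ofMul (Units.mk0 b h.2)],
      ExteriorAlgebra.ιMulti_range ℤ 2 ⟨_, rfl⟩⟩
  else 0

/-- The Dehn invariant `ν(z) = z ∧ (1 - z) ∈ ⋀²_ℤ(ℂˣ)` of a shape parameter `z`. -/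
noncomputable def dehnNu (z : ℂ) : ⋀[ℤ]^2 (Additive ℂˣ) :=
  cwedge z (1 - z)

/-!
Every argument of `ν` in the five-term relation, and its complement `1 - ·`, is a Laurent
monomial in the five units `x`, `y`, `1 - x`, `1 - y`, `x - y` (e.g. `1 - y / x = (x - y) / x`).
Expanding each `ν` by bimultiplicativity of the wedge thus reduces the relation to an identity
between wedges of five arbitrary elements of a commutative group, which holds by antisymmetry.
-/

open ExteriorAlgebra Additive

section CommGroup

variable {G : Type*} [CommGroup G]

noncomputable def wedge (u v : G) : ⋀[ℤ]^2 (Additive G) :=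
  exteriorPower.ιMulti ℤ 2 ![ofMul u, ofMul v]

theorem coe_wedge (u v : G) :
    (wedge u v : ExteriorAlgebra ℤ (Additive G)) = ι ℤ (ofMul u) * ι ℤ (ofMul v) := by
  simp [wedge, ιMulti_apply]

theorem wedge_mul_left (u v w : G) : wedge (u * v) w = wedge u w + wedge v w := by
  ext1
  push_cast [coe_wedge]
  rw [ofMul_mul, map_add, add_mul]

theorem wedge_mul_right (u v w : G) : wedge u (v * w) = wedge u v + wedge u w := by
  ext1
  push_cast [coe_wedge]
  rw [ofMul_mul, map_add, mul_add]

theorem wedge_div_left (u v w : G) : wedge (u / v) w = wedge u w - wedge v w := by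
  rw [eq_sub_iff_add_eq, ← wedge_mul_left, div_mul_cancel]

theorem wedge_div_right (u v w : G) : wedge u (v / w) = wedge u v - wedge u w := by
  rw [eq_sub_iff_add_eq, ← wedge_mul_right, div_mul_cancel]

theorem wedge_self (u : G) : wedge u u = 0 := by
  ext1
  push_cast [coe_wedge]
  exact ι_sq_zero _

theorem wedge_comm (u v : G) : wedge v u = -wedge u v := by
  ext1
  push_cast [coe_wedge]
  exact eq_neg_of_add_eq_zero_left (ι_add_mul_swap _ _)

theorem wedge_five_term (x y x' y' d : G) :
    wedge x x' - wedge y y' + wedge (y / x) (d / x)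
      - wedge (y * x' / (x * y')) (d / (x * y')) + wedge (x' / y') (d / y') = 0 := by
  simp only [wedge_mul_left, wedge_mul_right, wedge_div_left, wedge_div_right, wedge_self]
  rw [wedge_comm x x', wedge_comm x y']
  abel

end CommGroup

theorem cwedge_coe_units (u v : ℂˣ) : cwedge u v = wedge u v := by
  rw [cwedge, dif_pos ⟨u.ne_zero, v.ne_zero⟩]
  simp only [Units.mk0_val]
  rfl

theorem dehnNu_eq_wedge (z : ℂ) {u v : ℂˣ} (hu : (u : ℂ) = z) (hv : (v : ℂ) = 1 - z) :
    dehnNu z = wedge u v := by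
  subst hu
  rw [dehnNu, ← hv, cwedge_coe_units]

/-- the Dehn invariant `ν(z) = z ∧ (1-z)` vanishes on the five-term
relation, hence is well defined on the pre-Bloch group `𝒫(ℂ)`. -/
theorem dehn_invariant_five_term (x y : ℂ)
    (hx0 : x ≠ 0) (hx1 : x ≠ 1) (hy0 : y ≠ 0) (hy1 : y ≠ 1) (hxy : x ≠ y) :
    dehnNu x - dehnNu y + dehnNu (y / x)
      - dehnNu ((1 - x⁻¹) / (1 - y⁻¹)) + dehnNu ((1 - x) / (1 - y)) = 0 := by
  obtain ⟨X, hX⟩ := hx0.isUnit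
  obtain ⟨Y, hY⟩ := hy0.isUnit
  obtain ⟨X', hX'⟩ := (sub_ne_zero.mpr hx1.symm).isUnit
  obtain ⟨Y', hY'⟩ := (sub_ne_zero.mpr hy1.symm).isUnit
  obtain ⟨D, hD⟩ := (sub_ne_zero.mpr hxy).isUnit
  rw [dehnNu_eq_wedge x hX hX', dehnNu_eq_wedge y hY hY',
    dehnNu_eq_wedge (y / x) (u := Y / X) (v := D / X) (by push_cast [hX, hY]; rfl)
      (by push_cast [hX, hD]; field_simp),
    dehnNu_eq_wedge ((1 - x⁻¹) / (1 - y⁻¹)) (u := Y * X' / (X * Y')) (v := D / (X * Y'))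
      (by push_cast [hX, hY, hX', hY']; field_simp; ring)
      (by push_cast [hX, hY', hD]; field_simp; ring),
    dehnNu_eq_wedge ((1 - x) / (1 - y)) (u := X' / Y') (v := D / Y')
      (by push_cast [hX', hY']; rfl) (by push_cast [hY', hD]; field_simp; ring)]
  exact wedge_five_term X Y X' Y' D
end

section
/- The abelian group ⋀²_ℤ(ℂˣ) is uniquely divisible: for every positive integer k and every element w ∈ ⋀²_ℤ(ℂˣ) there exists a unique v ∈ ⋀²_ℤ(ℂˣ) with k·v = w. Equivalently, ⋀²_ℤ(ℂˣ) carries the structure of a ℚ-vector space. -/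
open Function Submodule

theorem Submodule.mem_torsion_int_iff_exists_nsmul {M : Type*} [AddCommGroup M] {x : M} :
    x ∈ torsion ℤ M ↔ ∃ n : ℕ, 0 < n ∧ n • x = 0 := by
  rw [← mem_toAddSubgroup, torsion_int, AddCommGroup.mem_torsion,
    isOfFinAddOrder_iff_nsmul_eq_zero]

theorem MultilinearMap.map_eq_map_of_forall_sub_mem {R ι M N : Type*} [Semiring R] [Fintype ι]
    [AddCommGroup M] [Module R M] [AddCommGroup N] [Module R N]
    (f : MultilinearMap R (fun _ : ι ↦ M) N) {T : Submodule R M}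
    (hf : ∀ v i, v i ∈ T → f v = 0) {v w : ι → M} (h : ∀ i, v i - w i ∈ T) : f v = f w := by
  classical
  suffices ∀ s : Finset ι, f (s.piecewise w v) = f v by simpa using (this .univ).symm
  intro s
  induction s using Finset.induction_on with
  | empty => simp
  | insert a s ha ih =>
    set u := s.piecewise w v
    have hua : u a = v a := Finset.piecewise_eq_of_notMem _ _ _ ha
    calc f ((insert a s).piecewise w v)
        = f (update u a (v a)) - f (update u a (v a - w a)) := by
          rw [Finset.piecewise_insert, ← map_update_sub, sub_sub_cancel]
      _ = f v := by
          rw [hf (update u a (v a - w a)) a (by simpa using h a), sub_zero, ← hua,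
            update_eq_self, ih]

theorem exteriorPower.map_smul_eq_pow_smul {R M N : Type*} [CommRing R] [AddCommGroup M]
    [Module R M] [AddCommGroup N] [Module R N] (n : ℕ) (c : R) (f : M →ₗ[R] N) :
    map n (c • f) = c ^ n • map n f := by
  ext v
  simp [AlternatingMap.map_smul_univ]

section Divisible

variable {M : Type*} [AddCommGroup M] [DivisibleBy M ℕ]

noncomputable instance : DivisibleBy (torsion ℤ M) ℕ :=
  divisibleByOfSMulRightSurj _ _ fun {k} hk ⟨t, ht⟩ ↦ by
    obtain ⟨m, hm, hmt⟩ := mem_torsion_int_iff_exists_nsmul.mp ht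
    obtain ⟨c, rfl⟩ := DivisibleBy.surjective_smul M ℕ hk t
    have hc : c ∈ torsion ℤ M :=
      mem_torsion_int_iff_exists_nsmul.mpr ⟨m * k, by positivity, by rwa [mul_smul]⟩
    exact ⟨⟨c, hc⟩, rfl⟩

namespace DivisibleBy

theorem exists_isCompl_torsion : ∃ V : Submodule ℤ M, IsCompl (torsion ℤ M) V := by
  let _ := AddGroup.divisibleByIntOfDivisibleByNat (torsion ℤ M)
  obtain ⟨r, hr⟩ := (Module.Baer.of_divisible (torsion ℤ M)).extension_property
    (torsion ℤ M).subtype (injective_subtype _) LinearMap.id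
  exact ⟨LinearMap.ker r, LinearMap.isCompl_of_proj (LinearMap.congr_fun hr)⟩

theorem nsmul_bijective_of_isCompl_torsion {V : Submodule ℤ M} (hV : IsCompl (torsion ℤ M) V)
    {k : ℕ} (hk : k ≠ 0) : Bijective fun v : V ↦ k • v := by
  refine ⟨fun v w hvw ↦ ?_, fun v ↦ ?_⟩
  · have hk0 : k • (v - w) = 0 := by rw [smul_sub, sub_eq_zero]; exact hvw
    have htors : ((v - w : V) : M) ∈ torsion ℤ M :=
      mem_torsion_int_iff_exists_nsmul.mpr
        ⟨k, Nat.pos_of_ne_zero hk, by exact_mod_cast congrArg Subtype.val hk0⟩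
    exact sub_eq_zero.mp (Subtype.ext (disjoint_def.mp hV.disjoint _ htors (v - w).2))
  · obtain ⟨c, hc⟩ := DivisibleBy.surjective_smul M ℕ hk v
    refine ⟨V.projectionOnto _ hV.symm c, ?_⟩
    simp only [← map_nsmul, hc, projectionOnto_apply_left]

theorem exists_smul_eq_projection {k : ℕ} (hk : k ≠ 0) :
    ∃ p d : M →ₗ[ℤ] M, (∀ x, x - p x ∈ torsion ℤ M) ∧ (k : ℤ) • d = p := by
  obtain ⟨V, hV⟩ := exists_isCompl_torsion (M := M)
  let e := LinearEquiv.ofBijective (k • LinearMap.id : V →ₗ[ℤ] V)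
    (nsmul_bijective_of_isCompl_torsion hV hk)
  refine ⟨V.projection _ hV.symm, V.subtype ∘ₗ e.symm ∘ₗ V.projectionOnto _ hV.symm,
    sub_projection_mem hV.symm, LinearMap.ext fun x ↦ ?_⟩
  have h := e.apply_symm_apply (V.projectionOnto _ hV.symm x)
  rw [LinearEquiv.ofBijective_apply, LinearMap.smul_apply, LinearMap.id_apply] at h
  rw [LinearMap.smul_apply, natCast_zsmul, projection_apply, ← h]
  rfl

end DivisibleBy

namespace exteriorPower

theorem ιMulti_eq_zero_of_mem_torsion {n : ℕ} (hn : 2 ≤ n) {v : Fin n → M} {i : Fin n}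
    (hi : v i ∈ torsion ℤ M) : ιMulti ℤ n v = 0 := by
  obtain ⟨m, hm, hmv⟩ := mem_torsion_int_iff_exists_nsmul.mp hi
  have : Nontrivial (Fin n) := Fin.nontrivial_iff_two_le.mpr hn
  obtain ⟨j, hji⟩ := exists_ne i
  obtain ⟨c, hc⟩ := DivisibleBy.surjective_smul M ℕ hm.ne' (v j)
  calc ιMulti ℤ n v = ιMulti ℤ n (update v j ((m : ℤ) • c)) := by
        rw [natCast_zsmul, show m • c = v j from hc, update_eq_self]
    _ = ιMulti ℤ n (update (update v j c) i ((m : ℤ) • v i)) := by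
        rw [AlternatingMap.map_update_smul, AlternatingMap.map_update_smul,
          (update_eq_self_iff (f := update v j c)).mpr (update_of_ne hji.symm c v).symm]
    _ = 0 := by rw [natCast_zsmul, hmv, AlternatingMap.map_update_zero]

theorem map_eq_id_of_forall_sub_mem_torsion {n : ℕ} (hn : 2 ≤ n) {p : M →ₗ[ℤ] M}
    (hp : ∀ x, x - p x ∈ torsion ℤ M) : map n p = LinearMap.id := by
  refine linearMap_ext (AlternatingMap.ext fun v ↦ ?_)
  simp only [LinearMap.compAlternatingMap_apply, map_apply_ιMulti, LinearMap.id_apply]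
  refine (ιMulti ℤ n).toMultilinearMap.map_eq_map_of_forall_sub_mem
    (fun _ _ hi ↦ ιMulti_eq_zero_of_mem_torsion hn hi) fun i ↦ ?_
  rw [← neg_sub]
  exact neg_mem (hp (v i))

theorem exists_pow_smul_eq_id {n : ℕ} (hn : 2 ≤ n) {k : ℕ} (hk : k ≠ 0) :
    ∃ L : ⋀[ℤ]^n M →ₗ[ℤ] ⋀[ℤ]^n M, (k : ℤ) ^ n • L = LinearMap.id := by
  obtain ⟨p, d, hp, hd⟩ := DivisibleBy.exists_smul_eq_projection (M := M) hk
  exact ⟨map n d, by rw [← map_smul_eq_pow_smul, hd, map_eq_id_of_forall_sub_mem_torsion hn hp]⟩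

theorem nsmul_bijective {n : ℕ} (hn : 2 ≤ n) {k : ℕ} (hk : k ≠ 0) :
    Bijective fun x : ⋀[ℤ]^n M ↦ k • x := by
  obtain ⟨L, hL⟩ := exists_pow_smul_eq_id (M := M) hn hk
  obtain ⟨m, rfl⟩ : ∃ m, n = m + 1 := ⟨n - 1, by omega⟩
  have hinv (x : ⋀[ℤ]^(m + 1) M) : (k : ℤ) ^ (m + 1) • L x = x := by
    rw [← LinearMap.smul_apply, hL, LinearMap.id_apply]
  refine bijective_iff_has_inverse.mpr ⟨fun x ↦ (k : ℤ) ^ m • L x, fun x ↦ ?_, fun x ↦ ?_⟩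
  · dsimp only
    rw [map_nsmul, ← natCast_zsmul, smul_smul, ← pow_succ, hinv]
  · dsimp only
    rw [← natCast_zsmul, smul_smul, ← pow_succ', hinv]

end exteriorPower

end Divisible

noncomputable instance IsAlgClosed.divisibleByAdditiveUnits {K : Type*} [Field K]
    [IsAlgClosed K] : DivisibleBy (Additive Kˣ) ℕ :=
  divisibleByOfSMulRightSurj _ _ fun {n} hn a ↦ by
    obtain ⟨z, hz⟩ := IsAlgClosed.exists_pow_nat_eq (a.toMul : K) (Nat.pos_of_ne_zero hn)
    have hz0 : z ≠ 0 := by rintro rfl; exact a.toMul.ne_zero (by rw [← hz, zero_pow hn])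
    exact ⟨.ofMul (Units.mk0 z hz0), Additive.toMul.injective (Units.ext (by simpa using hz))⟩

/-- `⋀²_ℤ(ℂˣ)` is uniquely divisible: for every positive integer `k`
and every `w` there is a unique `v` with `k • v = w`. Equivalently, it is a
`ℚ`-vector space. -/
theorem exteriorSquare_units_complex_uniquely_divisible (k : ℕ) (hk : 0 < k)
    (w : ⋀[ℤ]^2 (Additive ℂˣ)) :
    ∃! v : ⋀[ℤ]^2 (Additive ℂˣ), k • v = w :=
  (exteriorPower.nsmul_bijective le_rfl hk.ne').existsUnique w
end

section
/- Let m, l, x, y be nonzero complex numbers satisfying the two Ptolemy relations of the standard two-tetrahedron triangulation of the figure-eight knot complement: m⁴·l·x² + m⁴·l·x·y − m⁴·y² = 0 and −y² + m⁴·l·x² − m²·x·y = 0. Then the SL(2,ℂ) A-polynomial of the figure-eight knot vanishes at (m,l), i.e. m⁸l − m⁶l − m⁴ − 2m⁴l − m⁴l² − m²l + l = 0, and moreover m²(1 + m²l)·x = (m⁴ − 1)·y. -/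
/-! Subtracting the two Ptolemy relations leaves `y` times a linear relation between `x` and `y`,
so `x : y` is determined by `(m, l)`. Substituting that ratio into the second (homogeneous
quadratic) relation leaves `m⁴ y²` times the A-polynomial. -/

section

variable {R : Type*} [CommRing R] [IsDomain R]

theorem eq_zero_of_quadratic_form_eq_zero_of_mul_eq {a b e c d x y : R} (hy : y ≠ 0)
    (hlin : c * x = d * y) (hq : a * x ^ 2 + b * x * y + e * y ^ 2 = 0) :
    a * d ^ 2 + b * c * d + e * c ^ 2 = 0 := by
  have hsubst : y ^ 2 * (a * d ^ 2 + b * c * d + e * c ^ 2) = 0 := by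
    linear_combination c ^ 2 * hq - (a * (c * x + d * y) + b * c * y) * hlin
  exact (mul_eq_zero.mp hsubst).resolve_left (pow_ne_zero 2 hy)

theorem figureEight_ptolemy_linear_relation {m l x y : R} (hy : y ≠ 0)
    (h1 : m ^ 4 * l * x ^ 2 + m ^ 4 * l * x * y - m ^ 4 * y ^ 2 = 0)
    (h2 : -y ^ 2 + m ^ 4 * l * x ^ 2 - m ^ 2 * x * y = 0) :
    m ^ 2 * (1 + m ^ 2 * l) * x = (m ^ 4 - 1) * y :=
  mul_left_cancel₀ hy (by linear_combination h1 - h2)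

end

theorem figure_eight_A_polynomial_general (m l x y : ℂ)
    (hm : m ≠ 0) (hy : y ≠ 0)
    (h1 : m ^ 4 * l * x ^ 2 + m ^ 4 * l * x * y - m ^ 4 * y ^ 2 = 0)
    (h2 : -y ^ 2 + m ^ 4 * l * x ^ 2 - m ^ 2 * x * y = 0) :
    m ^ 8 * l - m ^ 6 * l - m ^ 4 - 2 * m ^ 4 * l - m ^ 4 * l ^ 2 - m ^ 2 * l + l = 0 ∧
      m ^ 2 * (1 + m ^ 2 * l) * x = (m ^ 4 - 1) * y := by
  have hlin := figureEight_ptolemy_linear_relation hy h1 h2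
  refine ⟨?_, hlin⟩
  have hres := eq_zero_of_quadratic_form_eq_zero_of_mul_eq (a := m ^ 4 * l) (b := -m ^ 2) (e := -1)
    hy hlin (by linear_combination h2)
  have hfactor : m ^ 4 *
      (m ^ 8 * l - m ^ 6 * l - m ^ 4 - 2 * m ^ 4 * l - m ^ 4 * l ^ 2 - m ^ 2 * l + l) = 0 := by
    linear_combination hres
  exact (mul_eq_zero.mp hfactor).resolve_left (pow_ne_zero 4 hm)

/-- any nonzero solution `(m, l, x, y)` of the two Ptolemy relations of
the standard two-tetrahedron triangulation of the figure-eight knot complement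
satisfies the `SL(2,ℂ)` A-polynomial of the figure-eight knot, and moreover
`m²(1 + m²l)x = (m⁴ - 1)y`. -/
theorem figure_eight_A_polynomial (m l x y : ℂ)
    (hm : m ≠ 0) (hl : l ≠ 0) (hx : x ≠ 0) (hy : y ≠ 0)
    (h1 : m ^ 4 * l * x ^ 2 + m ^ 4 * l * x * y - m ^ 4 * y ^ 2 = 0)
    (h2 : -y ^ 2 + m ^ 4 * l * x ^ 2 - m ^ 2 * x * y = 0) :
    m ^ 8 * l - m ^ 6 * l - m ^ 4 - 2 * m ^ 4 * l - m ^ 4 * l ^ 2 - m ^ 2 * l + l = 0 ∧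
      m ^ 2 * (1 + m ^ 2 * l) * x = (m ^ 4 - 1) * y :=
  figure_eight_A_polynomial_general m l x y hm hy h1 h2
end

section
/- Let u, m, l be nonzero complex numbers. Then in ⋀²_ℤ(ℂˣ): u⁻¹ ∧ (−m²·l·u) + (l·u²·m⁻²) ∧ (l·u) = −2·(m ∧ l). In particular, for the figure-eight knot complement with shapes z₁ = x/y and z₂ = (l′/m′²)(y/x)² satisfying 1−z₁ = −m′²l′(y/x) and 1−z₂ = l′(y/x), the Dehn invariant z₁∧(1−z₁) + z₂∧(1−z₂) equals −2·m′∧l′. -/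
theorem Matrix.update_vecCons_two_one {α : Type*} (x y z : α) :
    Function.update ![x, y] 1 z = ![x, z] := by
  ext i; fin_cases i <;> rfl

namespace exteriorPower

variable (R M : Type*) [CommRing R] [AddCommGroup M] [Module R M]

noncomputable def wedge : M →ₗ[R] M →ₗ[R] ⋀[R]^2 M :=
  LinearMap.mk₂ R (fun x y => ιMulti R 2 ![x, y])
    (fun x x' y => (ιMulti R 2).map_vecCons_add ![y] x x')
    (fun c x y => (ιMulti R 2).map_vecCons_smul ![y] c x)
    (fun x y y' => by
      simpa [Matrix.update_vecCons_two_one] using (ιMulti R 2).map_update_add ![x, y] 1 y y')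
    (fun c x y => by
      simpa [Matrix.update_vecCons_two_one] using (ιMulti R 2).map_update_smul ![x, y] 1 c y)

variable {R M}

theorem wedge_apply (x y : M) : wedge R M x y = ιMulti R 2 ![x, y] := rfl

theorem wedge_self (x : M) : wedge R M x x = 0 :=
  (ιMulti R 2).map_eq_zero_of_eq ![x, x] (i := 0) (j := 1) rfl (by decide)

theorem wedge_swap (x y : M) : wedge R M y x = -wedge R M x y := by
  simpa [wedge_apply] using (ιMulti R 2).map_swap ![x, y] (i := 0) (j := 1) (by decide)

-- The theorem in additive notation, `x, y, z` standing for `u, m, l` and the sign dropped.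
theorem wedge_figure_eight (x y z : M) :
    wedge R M (-x) (2 • y + z + x) + wedge R M (z + 2 • x - 2 • y) (z + x) =
      -((2 : ℤ) • wedge R M y z) := by
  simp only [map_add, map_sub, map_neg, map_nsmul, LinearMap.add_apply, LinearMap.sub_apply,
    LinearMap.neg_apply, LinearMap.smul_apply, wedge_self]
  rw [wedge_swap z x, wedge_swap y x]
  abel

end exteriorPower

open exteriorPower Additive

theorem Units.isSquare_of_isSquare_val {M : Type*} [CommMonoid M] {a : Mˣ}
    (h : IsSquare (a : M)) : IsSquare a := by
  obtain ⟨s, hs⟩ := h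
  have hs_unit : IsUnit s := isUnit_of_mul_isUnit_left (hs ▸ a.isUnit)
  exact ⟨hs_unit.unit, Units.ext hs⟩

theorem wedge_ofMul_eq_zero_of_sq_eq_one {G : Type*} [CommGroup G] {a ζ : G} (ha : IsSquare a)
    (hζ : ζ ^ 2 = 1) : wedge ℤ (Additive G) (ofMul a) (ofMul ζ) = 0 := by
  obtain ⟨s, rfl⟩ := ha
  calc wedge ℤ (Additive G) (ofMul (s * s)) (ofMul ζ)
      = wedge ℤ (Additive G) (ofMul s) (ofMul (ζ ^ 2)) := by
        rw [ofMul_mul, ofMul_pow, map_add, map_nsmul, LinearMap.add_apply]; abel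
    _ = 0 := by rw [hζ, ofMul_one, map_zero]

theorem cwedge_coe (a b : ℂˣ) : cwedge a b = wedge ℤ (Additive ℂˣ) (ofMul a) (ofMul b) := by
  rw [cwedge, dif_pos ⟨a.ne_zero, b.ne_zero⟩]
  simp only [Units.mk0_val]
  rfl

theorem cwedge_neg_right (a b : ℂ) : cwedge a (-b) = cwedge a b := by
  by_cases h : a ≠ 0 ∧ b ≠ 0
  · lift a to ℂˣ using h.1.isUnit
    lift b to ℂˣ using h.2.isUnit
    have hneg : ofMul (-b) = ofMul (-1 : ℂˣ) + ofMul b := by rw [← ofMul_mul, neg_one_mul]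
    have ha : IsSquare a := Units.isSquare_of_isSquare_val (Complex.isSquare a)
    rw [← Units.val_neg, cwedge_coe, cwedge_coe, hneg, map_add,
      wedge_ofMul_eq_zero_of_sq_eq_one ha (by simp), zero_add]
  · rw [cwedge, cwedge, dif_neg (by rwa [neg_ne_zero]), dif_neg h]

/-- the Dehn invariant computation for the two-tetrahedron triangulation
of the figure-eight knot complement: for nonzero `u, m, l`,
`u⁻¹ ∧ (-m²lu) + (lu²m⁻²) ∧ (lu) = -2 (m ∧ l)` in `⋀²_ℤ(ℂˣ)`. -/
theorem figure_eight_dehn_invariant (u m l : ℂ) (hu : u ≠ 0) (hm : m ≠ 0) (hl : l ≠ 0) :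
    cwedge u⁻¹ (-(m ^ 2 * l * u)) + cwedge (l * u ^ 2 * (m ^ 2)⁻¹) (l * u) =
      -((2 : ℤ) • cwedge m l) := by
  lift u to ℂˣ using hu.isUnit
  lift m to ℂˣ using hm.isUnit
  lift l to ℂˣ using hl.isUnit
  rw [cwedge_neg_right]
  simp only [← Units.val_pow_eq_pow_val, ← Units.val_mul, ← Units.val_inv_eq_inv_val, cwedge_coe,
    ofMul_mul, ofMul_pow, ofMul_inv, ← sub_eq_add_neg]
  exact wedge_figure_eight _ _ _
end

section
/- Let G be a group and let a, b, c ∈ G satisfy the face-pairing relations c·a⁻¹·b·c⁻¹·a = 1 and a·b⁻¹·c⁻¹·b = 1. Define x₁ = c and x₂ = a·b⁻¹. Then x₁ and x₂ satisfy the two-bridge relation x₁·w = w·x₂, where w = x₂·x₁⁻¹·x₂⁻¹·x₁. -/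
/-!
Eliminating `a` and `b` via `b = x₁ x₂⁻¹` and `a = x₂ x₁ x₂⁻¹`, which the second face-pairing
relation forces, turns the first face-pairing relator into the commutator-shaped word
`x₁ w x₂⁻¹ w⁻¹`, whose triviality is exactly the two-bridge relation.
-/

section FigureEight

variable {G : Type*} [Group G]

theorem eq_mul_inv_of_mul_inv_mul_inv_mul_eq_one {a b c : G} (h : a * b⁻¹ * c⁻¹ * b = 1) :
    b = c * (a * b⁻¹)⁻¹ :=
  calc b = c * (a * b⁻¹)⁻¹ * (a * b⁻¹ * c⁻¹ * b) := by group
    _ = c * (a * b⁻¹)⁻¹ := by rw [h, mul_one]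

theorem facePairing_relator_eq_one_iff (x₁ x₂ : G) :
    x₁ * (x₂ * x₁ * x₂⁻¹)⁻¹ * (x₁ * x₂⁻¹) * x₁⁻¹ * (x₂ * x₁ * x₂⁻¹) = 1 ↔
      x₁ * (x₂ * x₁⁻¹ * x₂⁻¹ * x₁) = (x₂ * x₁⁻¹ * x₂⁻¹ * x₁) * x₂ := by
  set w := x₂ * x₁⁻¹ * x₂⁻¹ * x₁
  have hrel : x₁ * (x₂ * x₁ * x₂⁻¹)⁻¹ * (x₁ * x₂⁻¹) * x₁⁻¹ * (x₂ * x₁ * x₂⁻¹) =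
      x₁ * w * x₂⁻¹ * w⁻¹ := by
    simp only [w]; group
  rw [hrel, mul_inv_eq_one, mul_inv_eq_iff_eq_mul]

end FigureEight

/-- if `a, b, c` satisfy the face-pairing relations of the standard
triangulation of the figure-eight knot complement, then `x₁ = c` and `x₂ = a b⁻¹`
satisfy the two-bridge relation `x₁ w = w x₂` with `w = x₂ x₁⁻¹ x₂⁻¹ x₁`. -/
theorem face_pairing_to_two_bridge {G : Type*} [Group G] (a b c : G)
    (h1 : c * a⁻¹ * b * c⁻¹ * a = 1) (h2 : a * b⁻¹ * c⁻¹ * b = 1)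
    (x₁ x₂ : G) (hx₁ : x₁ = c) (hx₂ : x₂ = a * b⁻¹) :
    x₁ * (x₂ * x₁⁻¹ * x₂⁻¹ * x₁) = (x₂ * x₁⁻¹ * x₂⁻¹ * x₁) * x₂ := by
  have hb : b = x₁ * x₂⁻¹ := by
    rw [hx₁, hx₂]; exact eq_mul_inv_of_mul_inv_mul_inv_mul_eq_one h2
  have ha : a = x₂ * x₁ * x₂⁻¹ := by
    calc a = a * b⁻¹ * b := (inv_mul_cancel_right a b).symm
      _ = x₂ * x₁ * x₂⁻¹ := by rw [← hx₂, hb, mul_assoc]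
  subst ha hb hx₁
  exact (facePairing_relator_eq_one_iff x₁ x₂).mp h1
end
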